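/- Let π be a permutation of [n] avoiding the pattern 321. (a) If n is even, then π is Jacobi if and only if π is down-up alternating (π₁ > π₂ < π₃ > π₄ < ⋯). (b) If n is odd, then π is Jacobi if and only if π is up-down alternating (π₁ < π₂ > π₃ < π₄ > ⋯) and π₁ = 1. -/
import Mathlib

set_option linter.unreachableTactic false
set_option linter.unusedTactic false
set_option linter.unnecessarySeqFocus false


/-- The length of `ρ_π(π_k)`: the maximal consecutive subword of `π` immediately to the
right of position `k`, all of whose letters are larger than `π_k`.  Letters of a
permutation of `[n] = {1,…,n}` are modelled by `(π i : ℕ) + 1` for `π : Equiv.Perm (Fin n)`. -/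
noncomputable def rhoLen {n : ℕ} (π : Equiv.Perm (Fin n)) (k : Fin n) : ℕ :=
  Nat.card {j : Fin n // k < j ∧ ∀ i : Fin n, k < i → i ≤ j → π k < π i}

/-- A permutation is Jacobi if `ρ_π(π_k)` has even length for every position `k`. -/
def IsJacobi {n : ℕ} (π : Equiv.Perm (Fin n)) : Prop :=
  ∀ k : Fin n, Even (rhoLen π k)

/-- `π` avoids the pattern `123`. -/
def Avoids123 {n : ℕ} (π : Equiv.Perm (Fin n)) : Prop :=
  ¬ ∃ i j k : Fin n, i < j ∧ j < k ∧ π i < π j ∧ π j < π k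

/-- `π` avoids the pattern `132`. -/
def Avoids132 {n : ℕ} (π : Equiv.Perm (Fin n)) : Prop :=
  ¬ ∃ i j k : Fin n, i < j ∧ j < k ∧ π i < π k ∧ π k < π j

/-- `π` avoids the pattern `213`. -/
def Avoids213 {n : ℕ} (π : Equiv.Perm (Fin n)) : Prop :=
  ¬ ∃ i j k : Fin n, i < j ∧ j < k ∧ π j < π i ∧ π i < π k

/-- `π` avoids the pattern `231`. -/
def Avoids231 {n : ℕ} (π : Equiv.Perm (Fin n)) : Prop :=
  ¬ ∃ i j k : Fin n, i < j ∧ j < k ∧ π k < π i ∧ π i < π j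

/-- `π` avoids the pattern `312`. -/
def Avoids312 {n : ℕ} (π : Equiv.Perm (Fin n)) : Prop :=
  ¬ ∃ i j k : Fin n, i < j ∧ j < k ∧ π j < π k ∧ π k < π i

/-- `π` avoids the pattern `321`. -/
def Avoids321 {n : ℕ} (π : Equiv.Perm (Fin n)) : Prop :=
  ¬ ∃ i j k : Fin n, i < j ∧ j < k ∧ π k < π j ∧ π j < π i

/-- `π` is up-down alternating: `π₁ < π₂ > π₃ < π₄ > ⋯`. -/
def IsUpDown {n : ℕ} (π : Equiv.Perm (Fin n)) : Prop :=
  ∀ (k : ℕ) (h : k + 1 < n),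
    if k % 2 = 0 then π ⟨k, by omega⟩ < π ⟨k + 1, h⟩
    else π ⟨k + 1, h⟩ < π ⟨k, by omega⟩

/-- `π` is down-up alternating: `π₁ > π₂ < π₃ > π₄ < ⋯`. -/
def IsDownUp {n : ℕ} (π : Equiv.Perm (Fin n)) : Prop :=
  ∀ (k : ℕ) (h : k + 1 < n),
    if k % 2 = 0 then π ⟨k + 1, h⟩ < π ⟨k, by omega⟩
    else π ⟨k, by omega⟩ < π ⟨k + 1, h⟩

namespace JacobiAux


variable {n : ℕ}

def Bad (π : Equiv.Perm (Fin n)) (k : Fin n) : Set ℕ :=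
  {j | j = n ∨ ∃ hj : j < n, (k : ℕ) < j ∧ π ⟨j, hj⟩ < π k}

noncomputable def stopN (π : Equiv.Perm (Fin n)) (k : Fin n) : ℕ :=
  sInf (Bad π k)

theorem stop_le (π : Equiv.Perm (Fin n)) (k : Fin n) : stopN π k ≤ n :=
  Nat.sInf_le (Or.inl rfl)

theorem stop_mem (π : Equiv.Perm (Fin n)) (k : Fin n) : stopN π k ∈ Bad π k :=
  Nat.sInf_mem ⟨n, Or.inl rfl⟩

theorem lt_stop (π : Equiv.Perm (Fin n)) (k : Fin n) : (k : ℕ) < stopN π k := by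
  rcases stop_mem π k with h | ⟨hj, hk, _⟩
  · rw [h]; exact k.isLt
  · exact hk

theorem stop_spec (π : Equiv.Perm (Fin n)) (k : Fin n) (h : stopN π k < n) :
    (k : ℕ) < stopN π k ∧ π ⟨stopN π k, h⟩ < π k := by
  rcases stop_mem π k with heq | ⟨hj, hk, hlt⟩
  · omega
  · exact ⟨hk, hlt⟩

theorem pi_lt_of_lt_stop (π : Equiv.Perm (Fin n)) (k : Fin n) (j : Fin n)
    (h1 : (k : ℕ) < (j : ℕ)) (h2 : (j : ℕ) < stopN π k) : π k < π j := by
  have hnb : (j : ℕ) ∉ Bad π k := Nat.notMem_of_lt_sInf h2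
  have hne : π j ≠ π k := fun hEq => by
    have h3 := congrArg Fin.val (π.injective hEq); omega
  rcases lt_or_gt_of_ne hne with hlt | hgt
  · exact absurd (Or.inr ⟨j.isLt, h1, hlt⟩) hnb
  · exact hgt

theorem stop_le_of_bad (π : Equiv.Perm (Fin n)) (k : Fin n) (j : Fin n)
    (h1 : (k : ℕ) < (j : ℕ)) (h2 : π j < π k) : stopN π k ≤ (j : ℕ) :=
  Nat.sInf_le (Or.inr ⟨j.isLt, h1, h2⟩)

theorem rho_eq (π : Equiv.Perm (Fin n)) (k : Fin n) :
    rhoLen π k = stopN π k - ((k : ℕ) + 1) := by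
  have key : ∀ j : Fin n, (k < j ∧ ∀ i : Fin n, k < i → i ≤ j → π k < π i)
      ↔ ((k : ℕ) < (j : ℕ) ∧ (j : ℕ) < stopN π k) := by
    intro j
    constructor
    · rintro ⟨h1, h2⟩
      refine ⟨h1, ?_⟩
      by_contra hc
      push_neg at hc
      have hs : stopN π k < n := lt_of_le_of_lt hc j.isLt
      have := h2 ⟨stopN π k, hs⟩ (stop_spec π k hs).1 hc
      exact absurd this (not_lt.2 (le_of_lt (stop_spec π k hs).2))
    · rintro ⟨h1, h2⟩
      exact ⟨h1, fun i hi hij => pi_lt_of_lt_stop π k i hi (lt_of_le_of_lt hij h2)⟩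
  have e1 : {j : Fin n // k < j ∧ ∀ i : Fin n, k < i → i ≤ j → π k < π i}
      ≃ {j : Fin n // (k : ℕ) < (j : ℕ) ∧ (j : ℕ) < stopN π k} :=
    Equiv.subtypeEquivRight key
  have e2 : {j : Fin n // (k : ℕ) < (j : ℕ) ∧ (j : ℕ) < stopN π k}
      ≃ (Finset.Ioo (k : ℕ) (stopN π k) : Finset ℕ) :=
    { toFun := fun j => ⟨(j.1 : ℕ), Finset.mem_Ioo.mpr j.2⟩,
      invFun := fun m => ⟨⟨(m : ℕ), lt_of_lt_of_le (Finset.mem_Ioo.mp m.2).2 (stop_le π k)⟩,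
        (Finset.mem_Ioo.mp m.2).1, (Finset.mem_Ioo.mp m.2).2⟩,
      left_inv := fun j => rfl,
      right_inv := fun m => rfl }
  rw [rhoLen, Nat.card_congr (e1.trans e2), Nat.card_eq_finsetCard, Nat.card_Ioo]
  omega

theorem rho_zero_of_descent (π : Equiv.Perm (Fin n)) (k : Fin n)
    (h : (k : ℕ) + 1 < n) (hd : π ⟨(k : ℕ) + 1, h⟩ < π k) : rhoLen π k = 0 := by
  have h1 : stopN π k ≤ (k : ℕ) + 1 :=
    stop_le_of_bad π k ⟨(k : ℕ) + 1, h⟩ (Nat.lt_succ_self _) hd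
  rw [rho_eq]; omega

theorem rho_eq_of_min (π : Equiv.Perm (Fin n)) (k : Fin n)
    (hall : ∀ j : Fin n, (k : ℕ) < (j : ℕ) → π k < π j) :
    rhoLen π k = n - (k : ℕ) - 1 := by
  have hs : stopN π k = n := by
    by_contra hne
    have h : stopN π k < n := lt_of_le_of_ne (stop_le π k) hne
    exact absurd (hall ⟨stopN π k, h⟩ (stop_spec π k h).1)
      (not_lt.2 (le_of_lt (stop_spec π k h).2))
  rw [rho_eq, hs]; omega

theorem forall_gt_of_stop_eq (π : Equiv.Perm (Fin n)) (k : Fin n) (hs : stopN π k = n) :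
    ∀ j : Fin n, (k : ℕ) < (j : ℕ) → π k < π j := fun j hj =>
  pi_lt_of_lt_stop π k j hj (by rw [hs]; exact j.isLt)

theorem stop_ge_of_ascent (π : Equiv.Perm (Fin n)) (k : Fin n)
    (h : (k : ℕ) + 1 < n) (ha : π k < π ⟨(k : ℕ) + 1, h⟩) :
    (k : ℕ) + 2 ≤ stopN π k := by
  by_contra hc
  push_neg at hc
  have h1 := lt_stop π k
  have hs : stopN π k < n := by omega
  have h2 := (stop_spec π k hs).2
  have hfin : (⟨stopN π k, hs⟩ : Fin n) = ⟨(k : ℕ) + 1, h⟩ := Fin.ext (by simp; omega)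
  rw [hfin] at h2
  exact absurd ha (not_lt.2 h2.le)

theorem stop_succ (π : Equiv.Perm (Fin n)) (hav : Avoids321 π) (k : Fin n)
    (h : (k : ℕ) + 1 < n) (ha : π k < π ⟨(k : ℕ) + 1, h⟩) (hs : stopN π k < n) :
    stopN π ⟨(k : ℕ) + 1, h⟩ = stopN π k := by
  have h2 : (k : ℕ) + 2 ≤ stopN π k := stop_ge_of_ascent π k h ha
  have hspec := stop_spec π k hs
  have hle : stopN π ⟨(k : ℕ) + 1, h⟩ ≤ stopN π k :=
    stop_le_of_bad π ⟨(k : ℕ) + 1, h⟩ ⟨stopN π k, hs⟩ (by simp; omega)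
      (lt_trans hspec.2 ha)
  rcases eq_or_lt_of_le hle with heq | hlt
  · exact heq
  · exfalso
    have htn : stopN π ⟨(k : ℕ) + 1, h⟩ < n := lt_trans hlt hs
    have hbspec := stop_spec π ⟨(k : ℕ) + 1, h⟩ htn
    have hmid : π k < π ⟨stopN π ⟨(k : ℕ) + 1, h⟩, htn⟩ := by
      apply pi_lt_of_lt_stop π k _ _ hlt
      have := lt_stop π ⟨(k : ℕ) + 1, h⟩
      simp at this ⊢
      omega
    exact hav ⟨⟨(k : ℕ) + 1, h⟩, ⟨stopN π ⟨(k : ℕ) + 1, h⟩, htn⟩, ⟨stopN π k, hs⟩,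
      hbspec.1, hlt, lt_trans hspec.2 hmid, hbspec.2⟩

theorem ascent_stop_top (π : Equiv.Perm (Fin n)) (hJ : IsJacobi π) (hav : Avoids321 π)
    (k : Fin n) (h : (k : ℕ) + 1 < n) (ha : π k < π ⟨(k : ℕ) + 1, h⟩) :
    stopN π k = n := by
  by_contra hne
  have hs : stopN π k < n := lt_of_le_of_ne (stop_le π k) hne
  have heq := stop_succ π hav k h ha hs
  have e1 := hJ k
  have e2 := hJ ⟨(k : ℕ) + 1, h⟩
  rw [rho_eq, Nat.even_iff] at e1 e2
  rw [heq] at e2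
  have hv : ((⟨(k : ℕ) + 1, h⟩ : Fin n) : ℕ) = (k : ℕ) + 1 := rfl
  rw [hv] at e2
  have h2 := stop_ge_of_ascent π k h ha
  omega



theorem rho_le (π : Equiv.Perm (Fin n)) (k : Fin n) : rhoLen π k ≤ n - (k : ℕ) - 1 := by
  have h1 := stop_le π k
  rw [rho_eq]
  omega

theorem jacobi_min_of_ascent (π : Equiv.Perm (Fin n)) (hJ : IsJacobi π) (hav : Avoids321 π)
    (k : Fin n) (h : (k : ℕ) + 1 < n) (ha : π k < π ⟨(k : ℕ) + 1, h⟩) :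
    ∀ j : Fin n, (k : ℕ) < (j : ℕ) → π k < π j :=
  forall_gt_of_stop_eq π k (ascent_stop_top π hJ hav k h ha)

theorem fwd_descent (π : Equiv.Perm (Fin n)) (hJ : IsJacobi π) (hav : Avoids321 π)
    (k : ℕ) (hk : k + 1 < n) (hp : (k + n) % 2 = 0) :
    π ⟨k + 1, hk⟩ < π ⟨k, by omega⟩ := by
  have hne : π (⟨k + 1, hk⟩ : Fin n) ≠ π ⟨k, by omega⟩ := fun hEq => by
    have h3 := congrArg Fin.val (π.injective hEq); simp at h3
  rcases lt_or_gt_of_ne hne with h | h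
  · exact h
  · exfalso
    have hall := jacobi_min_of_ascent π hJ hav ⟨k, by omega⟩ hk h
    have := hJ ⟨k, by omega⟩
    rw [rho_eq_of_min π _ hall, Nat.even_iff] at this
    have hv : ((⟨k, by omega⟩ : Fin n) : ℕ) = k := rfl
    rw [hv] at this
    omega

theorem fwd_ascent (π : Equiv.Perm (Fin n)) (hJ : IsJacobi π) (hav : Avoids321 π)
    (k : ℕ) (hk : k + 1 < n) (hp : (k + n) % 2 = 1) :
    π ⟨k, by omega⟩ < π ⟨k + 1, hk⟩ := by
  have hne : π (⟨k, by omega⟩ : Fin n) ≠ π ⟨k + 1, hk⟩ := fun hEq => by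
    have h3 := congrArg Fin.val (π.injective hEq); simp at h3
  rcases lt_or_gt_of_ne hne with h | h
  · exact h
  · exfalso
    have hk2 : k + 2 < n := by omega
    have hne2 : π (⟨k + 1, hk⟩ : Fin n) ≠ π ⟨k + 2, hk2⟩ := fun hEq => by
      have h3 := congrArg Fin.val (π.injective hEq); simp at h3
    rcases lt_or_gt_of_ne hne2 with h2 | h2
    · have hall := jacobi_min_of_ascent π hJ hav ⟨k + 1, hk⟩ hk2 h2
      have := hJ ⟨k + 1, hk⟩
      rw [rho_eq_of_min π _ hall, Nat.even_iff] at this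
      have hv : ((⟨k + 1, hk⟩ : Fin n) : ℕ) = k + 1 := rfl
      rw [hv] at this
      omega
    · exact hav ⟨⟨k, by omega⟩, ⟨k + 1, hk⟩, ⟨k + 2, hk2⟩,
        by simp [Fin.lt_def], by simp [Fin.lt_def], h2, h⟩

theorem bwd_jacobi (π : Equiv.Perm (Fin n)) (hav : Avoids321 π)
    (hA : ∀ (k : ℕ) (hk : k + 1 < n), (k + n) % 2 = 1 → π ⟨k, by omega⟩ < π ⟨k + 1, hk⟩)
    (hD : ∀ (k : ℕ) (hk : k + 1 < n), (k + n) % 2 = 0 → π ⟨k + 1, hk⟩ < π ⟨k, by omega⟩)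
    (hmin : n % 2 = 1 → ∀ h : 0 < n, (π ⟨0, h⟩ : ℕ) = 0) : IsJacobi π := by
  intro k
  by_cases h1 : (k : ℕ) + 1 < n
  · by_cases h2 : ((k : ℕ) + n) % 2 = 0
    · have hd : π ⟨(k : ℕ) + 1, h1⟩ < π k := hD (k : ℕ) h1 h2
      rw [rho_zero_of_descent π k h1 hd]
      exact Even.zero
    · have hall : ∀ j : Fin n, (k : ℕ) < (j : ℕ) → π k < π j := by
        intro j hjv
        have hne : π k ≠ π j := fun hEq => by
          have h3 := congrArg Fin.val (π.injective hEq); omega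
        rcases lt_or_gt_of_ne hne with hlt | hgt
        · exact hlt
        exfalso
        by_cases h0 : (k : ℕ) = 0
        · have hval : (π k : ℕ) = 0 := by
            have hm := hmin (by omega) (by omega)
            have he : (⟨0, by omega⟩ : Fin n) = k := Fin.ext (by simp; omega)
            rwa [he] at hm
          have hvj : (π j : ℕ) < (π k : ℕ) := hgt
          omega
        · rcases Nat.lt_or_ge ((k : ℕ) + 1) (j : ℕ) with hj2 | hj2
          · -- j ≥ k+2
            have hkn2 : (k : ℕ) + 2 < n := by have := j.isLt; omega
            have hd1 : π ⟨(k : ℕ) - 1 + 1, by omega⟩ < π ⟨(k : ℕ) - 1, by omega⟩ :=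
              hD ((k : ℕ) - 1) (by omega) (by omega)
            have he1 : (⟨(k : ℕ) - 1 + 1, by omega⟩ : Fin n) = k := Fin.ext (by simp; omega)
            rw [he1] at hd1
            have hk2 : π k < π ⟨(k : ℕ) + 2, hkn2⟩ := by
              have hne2 : π k ≠ π ⟨(k : ℕ) + 2, hkn2⟩ := fun hEq => by
                have h3 := congrArg Fin.val (π.injective hEq); simp at h3
              rcases lt_or_gt_of_ne hne2 with h' | h'
              · exact h'
              · exact absurd (And.intro trivial trivial).1 (fun _ => hav
                  ⟨⟨(k : ℕ) - 1, by omega⟩, k, ⟨(k : ℕ) + 2, hkn2⟩,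
                    by simp [Fin.lt_def] <;> omega, by simp [Fin.lt_def] <;> omega,
                    h', hd1⟩)
            rcases Nat.eq_or_lt_of_le (show (k : ℕ) + 2 ≤ (j : ℕ) by omega) with he | hlt3
            · have hje : j = ⟨(k : ℕ) + 2, hkn2⟩ := Fin.ext (by simp; omega)
              rw [hje] at hgt
              exact absurd hk2 (not_lt.2 hgt.le)
            · have hd2 : π ⟨(k : ℕ) + 1 + 1, by omega⟩ < π ⟨(k : ℕ) + 1, by omega⟩ :=
                hD ((k : ℕ) + 1) (by omega) (by omega)
              exact hav ⟨⟨(k : ℕ) + 1, h1⟩, ⟨(k : ℕ) + 2, hkn2⟩, j,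
                by simp [Fin.lt_def] <;> omega, by simp [Fin.lt_def] <;> omega,
                lt_trans hgt hk2, hd2⟩
          · -- j = k+1
            have hjk : j = ⟨(k : ℕ) + 1, h1⟩ := Fin.ext (by simp; omega)
            have ha := hA (k : ℕ) h1 (by omega)
            rw [← hjk] at ha
            have he2 : (⟨(k : ℕ), by omega⟩ : Fin n) = k := Fin.ext (by simp)
            rw [he2] at ha
            exact absurd ha (not_lt.2 hgt.le)
      rw [rho_eq_of_min π k hall, Nat.even_iff]
      omega
  · have h3 := rho_le π k
    have h4 := k.isLt
    have : rhoLen π k = 0 := by omega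
    rw [this]; exact Even.zero


end JacobiAux

open JacobiAux

/-- Characterization of 321-avoiding Jacobi permutations: for even `n`, they are exactly
the down-up alternating ones; for odd `n`, exactly the up-down alternating ones whose
first letter is `1`. -/
theorem jacobi_avoid_321_characterization (n : ℕ) (π : Equiv.Perm (Fin n))
    (hav : Avoids321 π) :
    (Even n → (IsJacobi π ↔ IsDownUp π)) ∧
    (Odd n → (IsJacobi π ↔ IsUpDown π ∧ ∀ h : 0 < n, (π ⟨0, h⟩ : ℕ) + 1 = 1)) := by
  constructor
  · intro hn
    have hn2 : n % 2 = 0 := Nat.even_iff.mp hn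
    constructor
    · intro hJ k hk
      by_cases h : k % 2 = 0
      · rw [if_pos h]
        exact fwd_descent π hJ hav k hk (by omega)
      · rw [if_neg h]
        exact fwd_ascent π hJ hav k hk (by omega)
    · intro hDU
      refine bwd_jacobi π hav ?_ ?_ ?_
      · intro k hk hp
        have h := hDU k hk
        rw [if_neg (show ¬ k % 2 = 0 by omega)] at h
        exact h
      · intro k hk hp
        have h := hDU k hk
        rw [if_pos (show k % 2 = 0 by omega)] at h
        exact h
      · intro hodd
        omega
  · intro hn
    have hn2 : n % 2 = 1 := Nat.odd_iff.mp hn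
    constructor
    · intro hJ
      have hUD : IsUpDown π := by
        intro k hk
        by_cases h : k % 2 = 0
        · rw [if_pos h]
          exact fwd_ascent π hJ hav k hk (by omega)
        · rw [if_neg h]
          exact fwd_descent π hJ hav k hk (by omega)
      refine ⟨hUD, ?_⟩
      intro h0
      by_cases h1 : 1 < n
      · have ha : π ⟨0, h0⟩ < π ⟨1, h1⟩ := by
          have h := hUD 0 h1
          rw [if_pos rfl] at h
          exact h
        have hall := jacobi_min_of_ascent π hJ hav ⟨0, h0⟩ h1 ha
        by_contra hne
        have hv : 0 < (π ⟨0, h0⟩ : ℕ) := by omega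
        have hj : π (π.symm ⟨0, h0⟩) = ⟨0, h0⟩ := π.apply_symm_apply _
        have hjne : (0 : ℕ) < (π.symm ⟨0, h0⟩ : ℕ) := by
          rcases Nat.eq_zero_or_pos (π.symm ⟨0, h0⟩ : ℕ) with hz | hp
          · exfalso
            have : π.symm ⟨0, h0⟩ = ⟨0, h0⟩ := Fin.ext (by simp [hz])
            rw [this] at hj
            have := congrArg Fin.val hj
            simp at this
            omega
          · exact hp
        have hlt := hall (π.symm ⟨0, h0⟩) hjne
        rw [hj] at hlt
        have := Fin.lt_def.mp hlt
        simp at this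
      · have hn1 : n = 1 := by omega
        have := (π ⟨0, h0⟩).isLt
        omega
    · rintro ⟨hUD, h0⟩
      refine bwd_jacobi π hav ?_ ?_ ?_
      · intro k hk hp
        have h := hUD k hk
        rw [if_pos (show k % 2 = 0 by omega)] at h
        exact h
      · intro k hk hp
        have h := hUD k hk
        rw [if_neg (show ¬ k % 2 = 0 by omega)] at h
        exact h
      · intro _ h
        have := h0 h
        omega
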